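/- arXiv:2512.12894 — 6 statements merged into one kernel-verified Lean document; each statement's English description precedes it below -/
import Mathlib

section
/- Let G be a locally compact second countable topological group with left Haar measure λ, and let f : G → ℝ be integrable with respect to λ. If for every compact set K ⊆ G with λ(K) > 0 one has (f * (χ_K/λ(K)))(x) ≥ 0 for λ-almost every x ∈ G, then f(x) ≥ 0 for λ-almost every x ∈ G. -/
/-!
Pairing `f` with a continuous compactly supported `g ≥ 0` is a limit of pairings of `f` with
the averages `h ↦ ⨍ u in K, g (h * u)` over shrinking compact neighbourhoods `K` of `1`; by
Fubini and left invariance each of these equals `∫ g · (f * χ_K / λ K) ≥ 0`, so `∫ f g ≥ 0`.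
Powers of a Urysohn function of a closed compact `K` then give `∫_K f ≥ 0`, and inner
regularity of Haar measure turns this into `f ≥ 0` almost everywhere.
-/

open MeasureTheory Filter
open scoped Topology ENNReal

theorem setAverage_eq_integral_mul_indicator_div {X : Type*} [MeasurableSpace X] (μ : Measure X)
    (φ : X → ℝ) {K : Set X} (hK : MeasurableSet K) :
    ⨍ u in K, φ u ∂μ = ∫ u, φ u * (K.indicator (fun _ => (1 : ℝ)) u / (μ K).toReal) ∂μ := by
  rw [setAverage_eq, smul_eq_mul, ← integral_indicator hK, ← integral_const_mul]
  congr with u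
  by_cases hu : u ∈ K <;> simp [hu, Measure.real, div_eq_inv_mul, mul_comm]

theorem setAverage_mem_closedBall {X E : Type*} [MeasurableSpace X] [NormedAddCommGroup E]
    [NormedSpace ℝ E] [CompleteSpace E] {μ : Measure X} {φ : X → E} {s : Set X}
    (hs : MeasurableSet s) (hs0 : μ s ≠ 0) (hstop : μ s ≠ ∞) (hint : IntegrableOn φ s μ)
    {c : E} {r : ℝ} (h : ∀ x ∈ s, φ x ∈ Metric.closedBall c r) :
    ⨍ x in s, φ x ∂μ ∈ Metric.closedBall c r :=
  (convex_closedBall c r).set_average_mem Metric.isClosed_closedBall hs0 hstop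
    ((ae_restrict_iff' hs).2 (.of_forall h)) hint

theorem ContinuousAt.tendsto_setAverage {X E ι : Type*} [TopologicalSpace X] [MeasurableSpace X]
    [NormedAddCommGroup E] [NormedSpace ℝ E] [CompleteSpace E] {μ : Measure X} {φ : X → E}
    {x : X} (hφ : ContinuousAt φ x) {l : Filter ι} {K : ι → Set X}
    (hK : Tendsto K l (𝓝 x).smallSets) (hKm : ∀ i, MeasurableSet (K i))
    (hK0 : ∀ i, μ (K i) ≠ 0) (hKtop : ∀ i, μ (K i) ≠ ∞)
    (hint : ∀ i, IntegrableOn φ (K i) μ) :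
    Tendsto (fun i => ⨍ y in K i, φ y ∂μ) l (𝓝 (φ x)) := by
  refine Metric.tendsto_nhds.2 fun ε hε => ?_
  have hball : ∀ᶠ y in 𝓝 x, φ y ∈ Metric.closedBall (φ x) (ε / 2) :=
    hφ.eventually (Metric.closedBall_mem_nhds _ (half_pos hε))
  filter_upwards [hK.eventually (eventually_smallSets_forall.2 hball)] with i hi
  have hmem := setAverage_mem_closedBall (hKm i) (hK0 i) (hKtop i) (hint i) hi
  exact (Metric.mem_closedBall.1 hmem).trans_lt (half_lt_self hε)

theorem MeasurableSet.exists_isCompact_isClosed_subset_measure_pos {X : Type*}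
    [TopologicalSpace X] [R1Space X] [MeasurableSpace X] [BorelSpace X] {μ : Measure X}
    [μ.InnerRegular] {A : Set X} (hA : MeasurableSet A) (hA0 : μ A ≠ 0) :
    ∃ K ⊆ A, IsCompact K ∧ IsClosed K ∧ 0 < μ K := by
  obtain ⟨K, hKA, hK, hμK⟩ := hA.exists_lt_isCompact (pos_iff_ne_zero.2 hA0)
  exact ⟨closure K, hK.closure_subset_measurableSet hA hKA, hK.closure, isClosed_closure,
    hK.measure_closure μ ▸ hμK⟩

theorem ae_nonneg_of_forall_setIntegral_isCompact_isClosed_nonneg {X : Type*}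
    [TopologicalSpace X] [R1Space X] [MeasurableSpace X] [BorelSpace X] {μ : Measure X}
    [μ.InnerRegular] {f : X → ℝ} (hf : Integrable f μ)
    (h : ∀ K, IsCompact K → IsClosed K → 0 ≤ ∫ x in K, f x ∂μ) :
    0 ≤ᵐ[μ] f := by
  set F := hf.1.mk f
  have hNm : MeasurableSet {x | F x < 0} :=
    measurableSet_lt hf.1.stronglyMeasurable_mk.measurable measurable_const
  suffices hN : μ {x | F x < 0} = 0 by
    filter_upwards [hf.1.ae_eq_mk, measure_eq_zero_iff_ae_notMem.1 hN] with x hfx hx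
    simpa [hfx] using hx
  by_contra hN
  obtain ⟨K, hKN, hK, hKc, hμK⟩ := hNm.exists_isCompact_isClosed_subset_measure_pos hN
  have hneg : 0 < ∫ x in K, -F x ∂μ := by
    refine (setIntegral_pos_iff_support_of_nonneg_ae ?_ ?_).2 ?_
    · exact (ae_restrict_iff' hKc.measurableSet).2
        (.of_forall fun x hx => (neg_pos.2 (hKN hx)).le)
    · exact (hf.congr hf.1.ae_eq_mk).neg.integrableOn
    · have hKsupp : K ⊆ Function.support fun x => -F x :=
        fun x hx => neg_ne_zero.2 (hKN hx).ne
      rwa [Set.inter_eq_right.2 hKsupp]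
  have hfF : ∫ x in K, f x ∂μ = ∫ x in K, F x ∂μ :=
    integral_congr_ae (ae_restrict_of_ae hf.1.ae_eq_mk)
  rw [integral_neg, ← hfF] at hneg
  exact (h K hK hKc).not_gt (neg_pos.1 hneg)

theorem setIntegral_nonneg_of_forall_integral_mul_nonneg {X : Type*} [TopologicalSpace X]
    [PerfectlyNormalSpace X] [LocallyCompactSpace X] [MeasurableSpace X] [OpensMeasurableSpace X]
    {μ : Measure X} {f : X → ℝ} (hf : Integrable f μ)
    (h : ∀ g : X → ℝ, Continuous g → HasCompactSupport g → 0 ≤ g → 0 ≤ ∫ x, f x * g x ∂μ)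
    {K : Set X} (hK : IsCompact K) (hKc : IsClosed K) :
    0 ≤ ∫ x in K, f x ∂μ := by
  obtain ⟨g, hgK, -, hgc, hg01⟩ := exists_continuous_one_zero_of_isCompact_of_isGδ hK hKc.isGδ
    isClosed_empty (Set.disjoint_empty K)
  -- `g = 1` exactly on `K` and `0 ≤ g < 1` elsewhere, so its powers tend to the indicator of `K`.
  have hpow : ∀ x, Tendsto (fun n => g x * g x ^ n) atTop (𝓝 (K.indicator 1 x)) := by
    intro x
    by_cases hx : x ∈ K
    · have hgx : g x = 1 := by rw [hgK] at hx; exact hx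
      simp [hx, hgx]
    · have hgx : g x < 1 := lt_of_le_of_ne (hg01 x).2 (by rw [hgK] at hx; exact hx)
      simpa [hx] using (tendsto_pow_atTop_nhds_zero_of_lt_one (hg01 x).1 hgx).const_mul (g x)
  have hnorm : ∀ n x, ‖g x * g x ^ n‖ ≤ 1 := fun n x => by
    rw [← pow_succ', norm_pow, Real.norm_of_nonneg (hg01 x).1]
    exact pow_le_one₀ (hg01 x).1 (hg01 x).2
  have hlim : Tendsto (fun n : ℕ => ∫ x, f x * (g x * g x ^ n) ∂μ) atTop
      (𝓝 (∫ x, f x * K.indicator 1 x ∂μ)) := by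
    refine tendsto_integral_of_dominated_convergence (fun x => ‖f x‖)
      (fun n => hf.1.mul (g.continuous.mul (g.continuous.pow n)).aestronglyMeasurable) hf.norm
      (fun n => .of_forall fun x => ?_) (.of_forall fun x => (hpow x).const_mul (f x))
    rw [norm_mul]
    exact mul_le_of_le_one_right (norm_nonneg _) (hnorm n x)
  have hterm : ∀ n : ℕ, 0 ≤ ∫ x, f x * (g x * g x ^ n) ∂μ := fun n =>
    h _ (g.continuous.mul (g.continuous.pow n)) hgc.mul_right
      fun x => mul_nonneg (hg01 x).1 (pow_nonneg (hg01 x).1 n)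
  have hind : ∫ x, f x * K.indicator 1 x ∂μ = ∫ x in K, f x ∂μ := by
    rw [← integral_indicator hKc.measurableSet]
    congr 1 with x
    by_cases hx : x ∈ K <;> simp [hx]
  exact hind ▸ ge_of_tendsto' hlim hterm

theorem integral_mul_integral_mul_inv_mul {G : Type*} [Group G] [MeasurableSpace G]
    [MeasurableMul₂ G] [MeasurableInv G] {μ : Measure G} [SFinite μ] [μ.IsMulLeftInvariant]
    {f g ψ : G → ℝ} (hf : Integrable f μ) (hg : Integrable g μ) (hψ : Measurable ψ) {C : ℝ}
    (hψC : ∀ u, ‖ψ u‖ ≤ C) :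
    ∫ x, g x * ∫ h, f h * ψ (h⁻¹ * x) ∂μ ∂μ = ∫ h, f h * ∫ u, g (h * u) * ψ u ∂μ ∂μ := by
  have hint : Integrable (fun p : G × G => g p.1 * (f p.2 * ψ (p.2⁻¹ * p.1))) (μ.prod μ) := by
    have hmeas : AEStronglyMeasurable (fun p : G × G => g p.1 * (f p.2 * ψ (p.2⁻¹ * p.1)))
        (μ.prod μ) :=
      hg.1.comp_fst.mul <| hf.1.comp_snd.mul
        (hψ.comp (measurable_snd.inv.mul measurable_fst)).aestronglyMeasurable
    refine ((hg.norm.mul_prod hf.norm).const_mul C).mono' hmeas (.of_forall fun p => ?_)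
    simp only [norm_mul]
    nlinarith [hψC (p.2⁻¹ * p.1), mul_nonneg (norm_nonneg (g p.1)) (norm_nonneg (f p.2)),
      norm_nonneg (ψ (p.2⁻¹ * p.1))]
  calc ∫ x, g x * ∫ h, f h * ψ (h⁻¹ * x) ∂μ ∂μ
      = ∫ x, ∫ h, g x * (f h * ψ (h⁻¹ * x)) ∂μ ∂μ := by simp_rw [integral_const_mul]
    _ = ∫ h, ∫ x, g x * (f h * ψ (h⁻¹ * x)) ∂μ ∂μ := integral_integral_swap hint
    _ = ∫ h, f h * ∫ x, g x * ψ (h⁻¹ * x) ∂μ ∂μ := by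
      simp_rw [← integral_const_mul]
      congr with h
      congr with x
      ring
    _ = ∫ h, f h * ∫ u, g (h * u) * ψ u ∂μ ∂μ := by
      congr with h
      rw [← integral_mul_left_eq_self _ h]
      simp only [inv_mul_cancel_left]

theorem integral_mul_nonneg_of_convolution_indicator_nonneg {G : Type*} [Group G]
    [TopologicalSpace G] [IsTopologicalGroup G] [LocallyCompactSpace G]
    [SecondCountableTopology G] [MeasurableSpace G] [BorelSpace G]
    (μ : Measure G) [μ.IsHaarMeasure] {f : G → ℝ} (hf : Integrable f μ)
    (hconv : ∀ K : Set G, IsCompact K → 0 < μ K →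
      ∀ᵐ x ∂μ, 0 ≤ ∫ h, f h * (K.indicator (fun _ => (1 : ℝ)) (h⁻¹ * x) / (μ K).toReal) ∂μ)
    {g : G → ℝ} (hg : Continuous g) (hgc : HasCompactSupport g) (hg0 : 0 ≤ g) :
    0 ≤ ∫ x, f x * g x ∂μ := by
  obtain ⟨K, hK, hKbasis⟩ := (isCompact_isClosed_basis_nhds (1 : G)).exists_antitone_subbasis
  have hKm n : MeasurableSet (K n) := (hK n).2.2.measurableSet
  have hK0 n : 0 < μ (K n) := μ.measure_pos_of_mem_nhds (hK n).1
  have hKtop n : μ (K n) ≠ ∞ := (hK n).2.1.measure_lt_top.ne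
  obtain ⟨C, hC⟩ := hg.bounded_above_of_compact_support hgc
  have hgh (h : G) : Continuous fun u => g (h * u) := hg.comp (continuous_const_mul h)
  have hint n h : IntegrableOn (fun u => g (h * u)) (K n) μ :=
    (hgh h).continuousOn.integrableOn_compact' (hK n).2.1 (hKm n)
  set ψ : ℕ → G → ℝ := fun n u => (K n).indicator (fun _ => (1 : ℝ)) u / (μ (K n)).toReal
  have hψ n : Measurable (ψ n) := (measurable_const.indicator (hKm n)).div_const _
  have hψ_le n u : ‖ψ n u‖ ≤ 1 / (μ (K n)).toReal := by
    by_cases hu : u ∈ K n <;> simp [ψ, hu]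
  have hφ_eq n h : ⨍ u in K n, g (h * u) ∂μ = ∫ u, g (h * u) * ψ n u ∂μ :=
    setAverage_eq_integral_mul_indicator_div μ _ (hKm n)
  have hφ_le n h : ‖⨍ u in K n, g (h * u) ∂μ‖ ≤ C :=
    mem_closedBall_zero_iff.1 <| setAverage_mem_closedBall (hKm n) (hK0 n).ne' (hKtop n)
      (hint n h) fun u _ => mem_closedBall_zero_iff.2 (hC (h * u))
  have hφ_meas n : AEStronglyMeasurable (fun h => ⨍ u in K n, g (h * u) ∂μ) μ := by
    simp_rw [hφ_eq n]
    exact (StronglyMeasurable.integral_prod_right' (f := fun p : G × G => g (p.1 * p.2) * ψ n p.2)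
      ((hg.measurable.comp measurable_mul).mul ((hψ n).comp measurable_snd)).stronglyMeasurable)
      |>.aestronglyMeasurable
  have hφ_lim h : Tendsto (fun n => ⨍ u in K n, g (h * u) ∂μ) atTop (𝓝 (g h)) := by
    simpa using (hgh h).continuousAt.tendsto_setAverage hKbasis.tendsto_smallSets hKm
      (fun n => (hK0 n).ne') hKtop (hint · h)
  have hlim : Tendsto (fun n => ∫ h, f h * ⨍ u in K n, g (h * u) ∂μ ∂μ) atTop
      (𝓝 (∫ h, f h * g h ∂μ)) := by
    refine tendsto_integral_of_dominated_convergence (fun h => ‖f h‖ * C)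
      (fun n => hf.1.mul (hφ_meas n)) (hf.norm.mul_const C)
      (fun n => .of_forall fun h => ?_) (.of_forall fun h => (hφ_lim h).const_mul (f h))
    rw [norm_mul]
    exact mul_le_mul_of_nonneg_left (hφ_le n h) (norm_nonneg _)
  refine ge_of_tendsto' hlim fun n => ?_
  simp_rw [hφ_eq n]
  rw [← integral_mul_integral_mul_inv_mul hf (hg.integrable_of_hasCompactSupport hgc) (hψ n)
    (hψ_le n)]
  refine integral_nonneg_of_ae ?_
  filter_upwards [hconv (K n) (hK n).2.1 (hK0 n)] with x hx
  exact mul_nonneg (hg0 x) hx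

/-- If `f` is integrable on a locally compact second countable group with left Haar
measure `μ`, and the convolution `f * (χ_K / μ K)` is a.e. nonnegative for every
compact `K` of positive measure, then `f` is a.e. nonnegative. -/
theorem stmt1 {G : Type*} [Group G] [TopologicalSpace G] [IsTopologicalGroup G]
    [LocallyCompactSpace G] [SecondCountableTopology G]
    [MeasurableSpace G] [BorelSpace G]
    (μ : Measure G) [μ.IsHaarMeasure]
    (f : G → ℝ) (hf : Integrable f μ)
    (hconv : ∀ K : Set G, IsCompact K → 0 < μ K →
      ∀ᵐ x ∂μ, 0 ≤ ∫ h, f h * (K.indicator (fun _ => (1 : ℝ)) (h⁻¹ * x) / (μ K).toReal) ∂μ) :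
    ∀ᵐ x ∂μ, 0 ≤ f x :=
  ae_nonneg_of_forall_setIntegral_isCompact_isClosed_nonneg hf fun _K hK hKc =>
    setIntegral_nonneg_of_forall_integral_mul_nonneg hf
      (fun _g hg hgc hg0 =>
        integral_mul_nonneg_of_convolution_indicator_nonneg μ hf hconv hg hgc hg0) hK hKc
end

section
/- Let G be a locally compact second countable unimodular topological group with Haar measure λ, let (F_n) be a two-sided Følner sequence of G consisting of compact symmetric sets (F_n = F_n⁻¹) each containing the identity, and let N : ℕ → ℕ be strictly increasing with N(2) > 2. Then there exists a strictly increasing sequence of indices (n_k)_{k≥1} with n₁ = 1 such that, defining E₁ = F_{n₁} and E_k = (E_{k−1}^{N(k)−2})⁻¹ F_{n_k} (E_{k−1}^{N(k)−2})⁻¹ for k ≥ 2 (where A^m denotes the m-fold product set), one has λ(E_k)/λ(F_{n_k}) → 1 as k → ∞. -/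
open MeasureTheory Pointwise Filter Topology
open scoped ENNReal

/-! Choose `n_k` so large that `K F_{n_k} K \ F_{n_k}` has measure at most `μ (F_{n_k}) / k`,
where `K = (E_{k-1} ^ (N k - 2))⁻¹` is compact. Since `1 ∈ E_{k-1}`, also `1 ∈ K`, hence
`F_{n_k} ⊆ E_k = K F_{n_k} K`, and `μ (E_k) / μ (F_{n_k})` is squeezed between `1` and `1 + 1/k`. -/

theorem IsCompact.pow {G : Type*} [Monoid G] [TopologicalSpace G] [ContinuousMul G]
    {s : Set G} (hs : IsCompact s) : ∀ n : ℕ, IsCompact (s ^ n)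
  | 0 => by simp
  | n + 1 => by simpa only [pow_succ] using (hs.pow n).mul hs

theorem Set.subset_mul_mul_of_one_mem {G : Type*} [Monoid G] {K : Set G} (hK : (1 : G) ∈ K)
    (A : Set G) : A ⊆ K * A * K :=
  (Set.subset_mul_right A hK).trans (Set.subset_mul_left _ hK)

section MeasureRatio

variable {α : Type*} [MeasurableSpace α] {μ : Measure α}

theorem one_le_measure_div_of_subset {A B : Set α} (hAB : A ⊆ B) (h0 : μ A ≠ 0)
    (htop : μ A ≠ ∞) : 1 ≤ μ B / μ A := by
  rw [← ENNReal.div_self h0 htop]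
  gcongr

theorem measure_div_le_one_add_measure_diff_div (A B : Set α) (h0 : μ A ≠ 0)
    (htop : μ A ≠ ∞) : μ B / μ A ≤ 1 + μ (B \ A) / μ A :=
  calc μ B / μ A ≤ (μ A + μ (B \ A)) / μ A := by
        gcongr
        exact (measure_le_inter_add_sdiff μ B A).trans
          (add_le_add_left (measure_mono Set.inter_subset_right) _)
    _ = 1 + μ (B \ A) / μ A := by rw [ENNReal.add_div, ENNReal.div_self h0 htop]

theorem tendsto_measure_div_of_subset {ι : Type*} {l : Filter ι} {A B : ι → Set α}
    (hAB : ∀ᶠ i in l, A i ⊆ B i) (h0 : ∀ i, μ (A i) ≠ 0) (htop : ∀ i, μ (A i) ≠ ∞)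
    (hdiff : Tendsto (fun i => μ (B i \ A i) / μ (A i)) l (𝓝 0)) :
    Tendsto (fun i => (μ (B i)).toReal / (μ (A i)).toReal) l (𝓝 1) := by
  have hupper : Tendsto (fun i => 1 + μ (B i \ A i) / μ (A i)) l (𝓝 1) := by
    simpa using tendsto_const_nhds.add hdiff
  have hratio : Tendsto (fun i => μ (B i) / μ (A i)) l (𝓝 1) :=
    tendsto_of_tendsto_of_tendsto_of_le_of_le' tendsto_const_nhds hupper
      (hAB.mono fun i hi => one_le_measure_div_of_subset hi (h0 i) (htop i))
      (Eventually.of_forall fun i => measure_div_le_one_add_measure_diff_div _ _ (h0 i) (htop i))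
  simpa only [ENNReal.toReal_div, Function.comp_def, ENNReal.toReal_one] using
    (ENNReal.tendsto_toReal ENNReal.one_ne_top).comp hratio

end MeasureRatio

section FolnerTower

variable {G : Type*} [Group G]

/-- `(n_k, E_k)`, where `next k m K` is the index chosen at stage `k` above `m` for the
compact set `K = (E_{k-1} ^ (N k - 2))⁻¹`. -/
def folnerTower (F : ℕ → Set G) (N : ℕ → ℕ) (next : ℕ → ℕ → Set G → ℕ) : ℕ → ℕ × Set G
  | 0 => (0, F 0)
  | 1 => (1, F 1)
  | k + 2 =>
    let p := folnerTower F N next (k + 1)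
    let K := (p.2 ^ (N (k + 2) - 2))⁻¹
    let n := next (k + 2) p.1 K
    (n, K * F n * K)

variable (F : ℕ → Set G) (N : ℕ → ℕ) (next : ℕ → ℕ → Set G → ℕ)

theorem folnerTower_snd_of_two_le {k : ℕ} (hk : 2 ≤ k) :
    (folnerTower F N next k).2 =
      ((folnerTower F N next (k - 1)).2 ^ (N k - 2))⁻¹ * F (folnerTower F N next k).1 *
        ((folnerTower F N next (k - 1)).2 ^ (N k - 2))⁻¹ := by
  obtain ⟨j, rfl⟩ := Nat.exists_eq_add_of_le' hk
  rfl

theorem strictMono_folnerTower_fst (hnext : ∀ k m K, m < next k m K) :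
    StrictMono fun k => (folnerTower F N next k).1 := by
  refine strictMono_nat_of_lt_succ fun k => ?_
  rcases k with _ | k
  · exact Nat.zero_lt_one
  · exact hnext _ _ _

theorem one_mem_folnerTower_snd (hFone : ∀ n, (1 : G) ∈ F n) :
    ∀ k, (1 : G) ∈ (folnerTower F N next k).2
  | 0 => hFone 0
  | 1 => hFone 1
  | k + 2 => by
    have hK : (1 : G) ∈ ((folnerTower F N next (k + 1)).2 ^ (N (k + 2) - 2))⁻¹ := by
      simpa using Set.one_mem_pow (one_mem_folnerTower_snd hFone (k + 1))
    exact Set.subset_mul_mul_of_one_mem hK _ (hFone _)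

theorem subset_folnerTower_snd (hFone : ∀ n, (1 : G) ∈ F n) {k : ℕ} (hk : 2 ≤ k) :
    F (folnerTower F N next k).1 ⊆ (folnerTower F N next k).2 := by
  rw [folnerTower_snd_of_two_le F N next hk]
  refine Set.subset_mul_mul_of_one_mem ?_ _
  simpa using Set.one_mem_pow (one_mem_folnerTower_snd F N next hFone (k - 1))

theorem isCompact_folnerTower_snd [TopologicalSpace G] [IsTopologicalGroup G]
    (hFcpt : ∀ n, IsCompact (F n)) : ∀ k, IsCompact (folnerTower F N next k).2
  | 0 => hFcpt 0
  | 1 => hFcpt 1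
  | k + 2 =>
    have hK := ((isCompact_folnerTower_snd hFcpt (k + 1)).pow (N (k + 2) - 2)).inv
    (hK.mul (hFcpt _)).mul hK

end FolnerTower

theorem stmt7_general {G : Type*} [Group G] [TopologicalSpace G] [IsTopologicalGroup G]
    [MeasurableSpace G]
    (μ : Measure G) [μ.IsHaarMeasure]
    (F : ℕ → Set G)
    (hFcpt : ∀ n, IsCompact (F n))
    (hFone : ∀ n, (1 : G) ∈ F n)
    (hFpos : ∀ n, 0 < μ (F n))
    (hFol : ∀ K : Set G, IsCompact K →
      Tendsto (fun n => μ ((K * F n * K) \ F n) / μ (F n)) atTop (𝓝 0))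
    (N : ℕ → ℕ) :
    ∃ nk : ℕ → ℕ, StrictMono nk ∧ nk 1 = 1 ∧
      ∃ E : ℕ → Set G, E 1 = F (nk 1) ∧
        (∀ k ≥ 2, E k =
          ((E (k - 1)) ^ (N k - 2))⁻¹ * F (nk k) * ((E (k - 1)) ^ (N k - 2))⁻¹) ∧
        Tendsto (fun k => (μ (E k)).toReal / (μ (F (nk k))).toReal) atTop (𝓝 1) := by
  -- stated for all `K` so that `choose` yields a total function; the bound is for compact `K`
  have hnext : ∀ (k m : ℕ) (K : Set G), ∃ n, m < n ∧
      (IsCompact K → μ ((K * F n * K) \ F n) / μ (F n) ≤ (k : ℝ≥0∞)⁻¹) := by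
    intro k m K
    by_cases hK : IsCompact K
    · have hpos : (0 : ℝ≥0∞) < (k : ℝ≥0∞)⁻¹ := ENNReal.inv_pos.2 (ENNReal.natCast_ne_top k)
      obtain ⟨n, hmn, hn⟩ :=
        ((eventually_gt_atTop m).and ((hFol K hK).eventually (ge_mem_nhds hpos))).exists
      exact ⟨n, hmn, fun _ => hn⟩
    · exact ⟨m + 1, m.lt_succ_self, fun h => absurd h hK⟩
  choose next hgt hle using hnext
  set T := folnerTower F N next
  have hdiff : Tendsto (fun k => μ ((T k).2 \ F (T k).1) / μ (F (T k).1)) atTop (𝓝 0) := by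
    refine tendsto_of_tendsto_of_tendsto_of_le_of_le' tendsto_const_nhds
      ENNReal.tendsto_inv_nat_nhds_zero (Eventually.of_forall fun _ => zero_le) ?_
    filter_upwards [eventually_ge_atTop 2] with k hk
    obtain ⟨j, rfl⟩ := Nat.exists_eq_add_of_le' hk
    exact hle _ _ _ ((isCompact_folnerTower_snd F N next hFcpt (j + 1)).pow _).inv
  refine ⟨fun k => (T k).1, strictMono_folnerTower_fst F N next hgt, rfl, fun k => (T k).2, rfl,
    fun k hk => folnerTower_snd_of_two_le F N next hk, ?_⟩
  exact tendsto_measure_div_of_subset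
    ((eventually_ge_atTop 2).mono fun k hk => subset_folnerTower_snd F N next hFone hk)
    (fun k => (hFpos _).ne') (fun k => (hFcpt _).measure_ne_top) hdiff

/-- Given a two-sided Følner sequence `(F n)` of symmetric compact sets containing
the identity in a locally compact second countable unimodular group, and a strictly
increasing `N` with `N 2 > 2`, there is a subsequence `(F (nk k))` with `nk 1 = 1`
such that the recursively defined sets
`E 1 = F (nk 1)`, `E k = (E (k-1) ^ (N k - 2))⁻¹ * F (nk k) * (E (k-1) ^ (N k - 2))⁻¹`
satisfy `μ (E k) / μ (F (nk k)) → 1`. -/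
theorem stmt7 {G : Type*} [Group G] [TopologicalSpace G] [IsTopologicalGroup G]
    [LocallyCompactSpace G] [SecondCountableTopology G]
    [MeasurableSpace G] [BorelSpace G]
    (μ : Measure G) [μ.IsHaarMeasure] [μ.IsMulRightInvariant]
    (F : ℕ → Set G)
    (hFcpt : ∀ n, IsCompact (F n))
    (hFsymm : ∀ n, (F n)⁻¹ = F n)
    (hFone : ∀ n, (1 : G) ∈ F n)
    (hFpos : ∀ n, 0 < μ (F n))
    (hFol : ∀ K : Set G, IsCompact K →
      Tendsto (fun n => μ ((K * F n * K) \ F n) / μ (F n)) atTop (𝓝 0))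
    (N : ℕ → ℕ) (hN : StrictMono N) (hN2 : 2 < N 2) :
    ∃ nk : ℕ → ℕ, StrictMono nk ∧ nk 1 = 1 ∧
      ∃ E : ℕ → Set G, E 1 = F (nk 1) ∧
        (∀ k ≥ 2, E k =
          ((E (k - 1)) ^ (N k - 2))⁻¹ * F (nk k) * ((E (k - 1)) ^ (N k - 2))⁻¹) ∧
        Tendsto (fun k => (μ (E k)).toReal / (μ (F (nk k))).toReal) atTop (𝓝 1) :=
  stmt7_general μ F hFcpt hFone hFpos hFol N
end

section
/- Let G be a locally compact second countable topological group with left Haar measure λ, and let (F_n) be a sequence of compact subsets of G with 0 < λ(F_n) < ∞ such that for every compact E ⊆ G, λ(E F_n \ F_n)/λ(F_n) → 0 as n → ∞. Then the subgroup of G generated by ⋃_{n} F_n is all of G. -/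
open MeasureTheory Pointwise Filter Topology
open scoped ENNReal

/-!
Fix `g`. Følner's condition for the compact set `{g}` gives an `n` with
`μ (g • F n \ F n) < μ (F n) = μ (g • F n)`, so `g • F n` meets `F n`, i.e. `g ∈ F n / F n`.
-/

theorem Set.mem_div_self_of_measure_smul_sdiff_lt {G : Type*} [Group G] [MeasurableSpace G]
    {μ : Measure G} [SMulInvariantMeasure G G μ] {A : Set G} {g : G}
    (h : μ (g • A \ A) < μ A) : g ∈ A / A := by
  have hmeet : (g • A ∩ A).Nonempty := by
    by_contra hdisj
    rw [Set.not_nonempty_iff_eq_empty, ← Set.disjoint_iff_inter_eq_empty] at hdisj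
    rw [hdisj.sdiff_eq_left, measure_smul] at h
    exact h.false
  obtain ⟨a, b, ⟨ha, hb⟩, rfl⟩ := Set.smul_inter_nonempty_iff'.mp hmeet
  exact Set.div_mem_div ha hb

theorem ENNReal.lt_of_div_lt_one {a b : ℝ≥0∞} (hb₀ : b ≠ 0) (hb : b ≠ ∞) (h : a / b < 1) :
    a < b := by
  simpa using (ENNReal.div_lt_iff (.inl hb₀) (.inl hb)).mp h

theorem stmt8_general {G : Type*} [Group G] [TopologicalSpace G]
    [MeasurableSpace G]
    (μ : Measure G) [μ.IsHaarMeasure]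
    (F : ℕ → Set G)
    (hFpos : ∀ n, 0 < μ (F n))
    (hFfin : ∀ n, μ (F n) < ⊤)
    (hFol : ∀ E : Set G, IsCompact E →
      Tendsto (fun n => μ ((E * F n) \ F n) / μ (F n)) atTop (𝓝 0)) :
    Subgroup.closure (⋃ n, F n) = ⊤ := by
  rw [Subgroup.eq_top_iff']
  intro g
  obtain ⟨n, hn⟩ := ((hFol {g} isCompact_singleton).eventually_lt_const one_pos).exists
  rw [Set.singleton_mul] at hn
  obtain ⟨a, ha, b, hb, rfl⟩ := Set.mem_div_self_of_measure_smul_sdiff_lt (μ := μ)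
    (ENNReal.lt_of_div_lt_one (hFpos n).ne' (hFfin n).ne hn)
  have hF : F n ⊆ Subgroup.closure (⋃ n, F n) :=
    (Set.subset_iUnion F n).trans Subgroup.subset_closure
  exact div_mem (hF ha) (hF hb)

/-- If `(F n)` is a sequence of compact sets of positive finite left Haar measure in
a locally compact second countable group which is left Følner (for every compact
`E`, `μ (E F n \ F n) / μ (F n) → 0`), then the subgroup generated by `⋃ n, F n`
is all of `G`. -/
theorem stmt8 {G : Type*} [Group G] [TopologicalSpace G] [IsTopologicalGroup G]
    [LocallyCompactSpace G] [SecondCountableTopology G]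
    [MeasurableSpace G] [BorelSpace G]
    (μ : Measure G) [μ.IsHaarMeasure]
    (F : ℕ → Set G)
    (hFcpt : ∀ n, IsCompact (F n))
    (hFpos : ∀ n, 0 < μ (F n))
    (hFfin : ∀ n, μ (F n) < ⊤)
    (hFol : ∀ E : Set G, IsCompact E →
      Tendsto (fun n => μ ((E * F n) \ F n) / μ (F n)) atTop (𝓝 0)) :
    Subgroup.closure (⋃ n, F n) = ⊤ :=
  stmt8_general μ F hFpos hFfin hFol
end

section
/- Let (X, μ) be a probability space and let G be a topological group equipped with its Borel σ-algebra, acting on X by measure-preserving transformations such that the action map G × X → X is measurable. Let ω be a Borel probability measure on G, and for f ∈ L²(X, μ) define (Tf)(x) = ∫_G f(g⁻¹·x) dω(g). If f ∈ L²(X, μ) satisfies Tf = f in L²(X, μ), then for ω-almost every g ∈ G one has f(g⁻¹·x) = f(x) for μ-almost every x ∈ X. -/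
/-!
Write `Φ (g, x) = g⁻¹ • x`. Since every `Φ g` preserves `μ` and `ω` is a probability measure,
both `(g, x) ↦ f (Φ (g, x))` and `(g, x) ↦ f x` have the same `L²(ω × μ)` norm as `f`, while by
Fubini and `T f = f` their inner product is `⟨T f, f⟩ = ‖f‖²`. Hence the squared `L²` distance
`‖f ∘ Φ‖² + ‖f‖² - 2 ⟨f ∘ Φ, f⟩` vanishes, so `f (g⁻¹ • x) = f x` for `ω × μ`-almost every
`(g, x)`, and Fubini again gives the claim.
-/

open MeasureTheory

namespace MeasureTheory

variable {α β : Type*} [MeasurableSpace α] [MeasurableSpace β]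

theorem MeasurePreserving.integral_comp_of_aestronglyMeasurable {E : Type*}
    [NormedAddCommGroup E] [NormedSpace ℝ E] {μ : Measure α} {ν : Measure β} {f : α → β}
    (hf : MeasurePreserving f μ ν) {g : β → E} (hg : AEStronglyMeasurable g ν) :
    ∫ x, g (f x) ∂μ = ∫ y, g y ∂ν := by
  rw [← hf.map_eq] at hg ⊢
  exact (integral_map hf.aemeasurable hg).symm

theorem ae_eq_of_integral_sq_eq_integral_mul {ν : Measure α} {u v : α → ℝ}
    (hu : MemLp u 2 ν) (hv : MemLp v 2 ν)
    (hu2 : ∫ a, u a ^ 2 ∂ν = ∫ a, u a * v a ∂ν) (hv2 : ∫ a, v a ^ 2 ∂ν = ∫ a, u a * v a ∂ν) :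
    u =ᵐ[ν] v := by
  have hdist : ∫ a, (u a - v a) ^ 2 ∂ν = 0 := by
    have hexpand :
        (fun a => (u a - v a) ^ 2) = fun a => u a ^ 2 + v a ^ 2 - 2 * (u a * v a) := by
      ext a; ring
    have huv : Integrable (fun a => u a * v a) ν := hu.integrable_mul hv
    have hsum : Integrable (fun a => u a ^ 2 + v a ^ 2) ν := hu.integrable_sq.add hv.integrable_sq
    rw [hexpand, integral_sub hsum (huv.const_mul 2),
      integral_add hu.integrable_sq hv.integrable_sq, integral_const_mul, hu2, hv2]
    ring
  have hsq := (integral_eq_zero_iff_of_nonneg (fun a => sq_nonneg (u a - v a))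
    (hu.sub hv).integrable_sq).1 hdist
  filter_upwards [hsq] with a ha
  simpa [sub_eq_zero] using ha

variable {ω : Measure α} [IsProbabilityMeasure ω] {μ : Measure β} [SFinite μ]
  {Φ : α → β → β}

theorem measurePreserving_uncurry_of_forall (hΦ : Measurable (Function.uncurry Φ))
    (hΦμ : ∀ a, MeasurePreserving (Φ a) μ μ) :
    MeasurePreserving (Function.uncurry Φ) (ω.prod μ) μ :=
  measurePreserving_snd.comp <|
    (MeasurePreserving.id ω).skew_product hΦ (ae_of_all _ fun a => (hΦμ a).map_eq)

theorem ae_comp_ae_eq_of_average_comp_ae_eq (hΦ : Measurable (Function.uncurry Φ))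
    (hΦμ : ∀ a, MeasurePreserving (Φ a) μ μ) {f : β → ℝ} (hf : MemLp f 2 μ)
    (hfix : (fun x => ∫ a, f (Φ a x) ∂ω) =ᵐ[μ] f) :
    ∀ᵐ a ∂ω, (fun x => f (Φ a x)) =ᵐ[μ] f := by
  have hΨ : MeasurePreserving (Function.uncurry Φ) (ω.prod μ) μ :=
    measurePreserving_uncurry_of_forall hΦ hΦμ
  have hsnd : MeasurePreserving Prod.snd (ω.prod μ) μ := measurePreserving_snd
  have hfΨ : MemLp (fun p => f (Function.uncurry Φ p)) 2 (ω.prod μ) :=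
    hf.comp_measurePreserving hΨ
  have hfsnd : MemLp (fun p => f p.2) 2 (ω.prod μ) := hf.comp_measurePreserving hsnd
  have hcross : ∫ p, f (Function.uncurry Φ p) * f p.2 ∂(ω.prod μ) = ∫ x, f x ^ 2 ∂μ := by
    rw [integral_prod_symm (fun p => f (Function.uncurry Φ p) * f p.2)
      (hfΨ.integrable_mul hfsnd)]
    refine integral_congr_ae ?_
    filter_upwards [hfix] with x hx
    simp only [Function.uncurry_apply_pair, integral_mul_const, hx, sq]
  have hae : ∀ᵐ p ∂(ω.prod μ), f (Function.uncurry Φ p) = f p.2 := by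
    refine ae_eq_of_integral_sq_eq_integral_mul hfΨ hfsnd ?_ ?_ <;> rw [hcross]
    · exact hΨ.integral_comp_of_aestronglyMeasurable (hf.1.pow 2)
    · exact hsnd.integral_comp_of_aestronglyMeasurable (hf.1.pow 2)
  exact Measure.ae_ae_of_ae_prod hae

end MeasureTheory

/-- If a topological group `G` acts measurably and measure-preservingly on a
probability space `(X, μ)`, `ω` is a Borel probability measure on `G`, and
`f ∈ L²(X, μ)` satisfies `T f = f` in `L²` where `(T f)(x) = ∫ f(g⁻¹ • x) dω(g)`,
then for `ω`-almost every `g`, `f(g⁻¹ • x) = f(x)` for `μ`-almost every `x`. -/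
theorem stmt9 {G X : Type*} [Group G] [TopologicalSpace G] [IsTopologicalGroup G]
    [MeasurableSpace G] [BorelSpace G]
    [MeasurableSpace X] (μ : Measure X) [IsProbabilityMeasure μ]
    [MulAction G X]
    (hmeas : Measurable fun p : G × X => p.1 • p.2)
    (hmp : ∀ g : G, MeasurePreserving (fun x => g • x) μ μ)
    (ω : Measure G) [IsProbabilityMeasure ω]
    (f : X → ℝ) (hf : MemLp f 2 μ)
    (hfix : (fun x => ∫ g, f (g⁻¹ • x) ∂ω) =ᵐ[μ] f) :
    ∀ᵐ g ∂ω, (fun x => f (g⁻¹ • x)) =ᵐ[μ] f :=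
  ae_comp_ae_eq_of_average_comp_ae_eq (Φ := fun g x => g⁻¹ • x)
    (hmeas.comp (measurable_fst.inv.prodMk measurable_snd)) (fun g => hmp g⁻¹) hf hfix
end

section
/- Define l : ℕ → ℕ by l(1) = 1 and l(n) = 17^{2^n · l(n−1)} for n ≥ 2, and define m(n) = l(n) + Σ_{j=1}^{n−1} l(j) · 2^{(n²−j²+3n−3j−4)/2} · ∏_{k=j}^{n−1} (1 − 2^{−k}) for n ≥ 2. Then for every n ≥ 2, m(n) < 2·l(n). -/
/-!
Every factor `1 - 2⁻ᵏ` lies in `[0, 1]`, and `l` is increasing from `l 1` on, so each of the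
`n - 1` summands is at most `L * 2 ^ ((n² + 3n) / 2)` with `L = l (n - 1)`. For `L ≥ 1`,
`n - 1 + L + (n² + 3n) / 2 ≤ 4 * 2ⁿ * L`, so the whole sum is below
`16 ^ (2ⁿ * L) < 17 ^ (2ⁿ * L) = l n`.
-/

open Finset

lemma sq_add_five_mul_lt_two_pow (n : ℕ) : n ^ 2 + 5 * n < 2 ^ (n + 3) := by
  induction n with
  | zero => norm_num
  | succ k ih =>
    have : k < 2 ^ k := Nat.lt_two_pow_self
    have : 2 ^ (k + 1 + 3) = 16 * 2 ^ k := by ring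
    have : 2 ^ (k + 3) = 8 * 2 ^ k := by ring
    nlinarith

lemma sub_one_mul_mul_two_pow_lt_seventeen_pow (n L : ℕ) :
    (n - 1) * (L * 2 ^ ((n ^ 2 + 3 * n) / 2)) < 17 ^ (2 ^ n * L) := by
  rcases Nat.eq_zero_or_pos L with rfl | hL
  · simp
  set P := (n ^ 2 + 3 * n) / 2
  have hP : P + n < 4 * 2 ^ n := by
    have := sq_add_five_mul_lt_two_pow n
    rw [pow_add] at this
    omega
  have hexp : n - 1 + L + P ≤ 4 * (2 ^ n * L) := by
    obtain ⟨K, rfl⟩ : ∃ K, L = K + 1 := ⟨L - 1, by omega⟩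
    have : K ≤ 2 ^ n * K := Nat.le_mul_of_pos_left _ (by positivity)
    rw [mul_add, mul_one]
    generalize 2 ^ n * K = T at *
    omega
  calc (n - 1) * (L * 2 ^ P) ≤ 2 ^ (n - 1) * (2 ^ L * 2 ^ P) := by
        gcongr <;> exact Nat.lt_two_pow_self.le
    _ = 2 ^ (n - 1 + L + P) := by rw [pow_add, pow_add, mul_assoc]
    _ ≤ 2 ^ (4 * (2 ^ n * L)) := Nat.pow_le_pow_right two_pos hexp
    _ = 16 ^ (2 ^ n * L) := by rw [pow_mul]; norm_num
    _ < 17 ^ (2 ^ n * L) := Nat.pow_lt_pow_left (by norm_num) (by positivity)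

lemma prod_one_sub_inv_two_pow_le_one (s : Finset ℕ) :
    ∏ k ∈ s, (1 - ((2 : ℝ) ^ k)⁻¹) ≤ 1 :=
  prod_le_one (fun k _ ↦ sub_nonneg.2 (inv_le_one_of_one_le₀ (one_le_pow₀ one_le_two)))
    (fun k _ ↦ sub_le_self _ (by positivity))

section Recurrence

variable {l : ℕ → ℕ} (hl : ∀ n ≥ 2, l n = 17 ^ (2 ^ n * l (n - 1)))
include hl

lemma monotoneOn_of_seventeen_pow_rec : MonotoneOn l (Set.Ici 1) := by
  refine monotoneOn_nat_Ici_of_le_succ fun b hb ↦ ?_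
  rw [hl (b + 1) (by omega), Nat.add_sub_cancel]
  calc l b ≤ 2 ^ (b + 1) * l b := Nat.le_mul_of_pos_left _ (by positivity)
    _ ≤ 17 ^ (2 ^ (b + 1) * l b) := (Nat.lt_pow_self (by norm_num)).le

lemma sum_mul_two_pow_lt_of_seventeen_pow_rec {n : ℕ} (hn : 2 ≤ n) :
    ∑ j ∈ Icc 1 (n - 1), l j * 2 ^ ((n ^ 2 - j ^ 2 + 3 * n - 3 * j - 4) / 2) < l n := by
  calc ∑ j ∈ Icc 1 (n - 1), l j * 2 ^ ((n ^ 2 - j ^ 2 + 3 * n - 3 * j - 4) / 2)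
      ≤ ∑ _j ∈ Icc 1 (n - 1), l (n - 1) * 2 ^ ((n ^ 2 + 3 * n) / 2) := by
        refine sum_le_sum fun j hj ↦ ?_
        rw [mem_Icc] at hj
        gcongr
        · exact monotoneOn_of_seventeen_pow_rec hl (Set.mem_Ici.2 hj.1)
            (Set.mem_Ici.2 (hj.1.trans hj.2)) hj.2
        · exact one_le_two
        · omega
    _ = (n - 1) * (l (n - 1) * 2 ^ ((n ^ 2 + 3 * n) / 2)) := by simp
    _ < 17 ^ (2 ^ n * l (n - 1)) := sub_one_mul_mul_two_pow_lt_seventeen_pow n _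
    _ = l n := (hl n hn).symm

end Recurrence

theorem stmt16_general (l : ℕ → ℕ) (m : ℕ → ℝ)
    (hl : ∀ n ≥ 2, l n = 17 ^ (2 ^ n * l (n - 1)))
    (hm : ∀ n ≥ 2, m n = (l n : ℝ) +
      ∑ j ∈ Finset.Icc 1 (n - 1), (l j : ℝ) *
        2 ^ ((n ^ 2 - j ^ 2 + 3 * n - 3 * j - 4) / 2) *
        ∏ k ∈ Finset.Icc j (n - 1), (1 - ((2 : ℝ) ^ k)⁻¹)) :
    ∀ n ≥ 2, m n < 2 * (l n : ℝ) := by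
  intro n hn
  have hfactors := sum_le_sum fun j (_ : j ∈ Icc 1 (n - 1)) ↦
    mul_le_of_le_one_right
      (by positivity : (0 : ℝ) ≤ l j * 2 ^ ((n ^ 2 - j ^ 2 + 3 * n - 3 * j - 4) / 2))
      (prod_one_sub_inv_two_pow_le_one (Icc j (n - 1)))
  have hsum : ∑ j ∈ Icc 1 (n - 1),
      (l j : ℝ) * 2 ^ ((n ^ 2 - j ^ 2 + 3 * n - 3 * j - 4) / 2) < (l n : ℝ) := by
    exact_mod_cast sum_mul_two_pow_lt_of_seventeen_pow_rec hl hn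
  rw [hm n hn]
  linarith

/-- With `l 1 = 1`, `l n = 17 ^ (2^n * l (n-1))` for `n ≥ 2`, and
`m n = l n + ∑_{j=1}^{n-1} l j * 2^{(n²-j²+3n-3j-4)/2} * ∏_{k=j}^{n-1} (1 - 2^{-k})`,
one has `m n < 2 * l n` for every `n ≥ 2`. -/
theorem stmt16 (l : ℕ → ℕ) (m : ℕ → ℝ)
    (hl1 : l 1 = 1)
    (hl : ∀ n ≥ 2, l n = 17 ^ (2 ^ n * l (n - 1)))
    (hm : ∀ n ≥ 2, m n = (l n : ℝ) +
      ∑ j ∈ Finset.Icc 1 (n - 1), (l j : ℝ) *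
        2 ^ ((n ^ 2 - j ^ 2 + 3 * n - 3 * j - 4) / 2) *
        ∏ k ∈ Finset.Icc j (n - 1), (1 - ((2 : ℝ) ^ k)⁻¹)) :
    ∀ n ≥ 2, m n < 2 * (l n : ℝ) :=
  stmt16_general l m hl hm
end

section
/- Define l(n) = 2^{n²} for n ≥ 1, and define m(1) = l(1) = 2 and m(n) = l(n) + 2·(2^n − 2)·m(n−1) for n ≥ 2. Then m(n)/l(n) → 1 as n → ∞. -/
open Filter Topology

/-!
The ratio `r n = m n / l n` satisfies `r (n + 1) = 1 + c n * r n`, where the coefficient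
`c n ≈ 2⁻ⁿ` comes from `l (n + 1) / l n = 2 ^ (2n + 1)`. Since `c n ≤ 1/2`, the ratio stays
in `[0, 2]`, so `r (n + 1) - 1 = c n * r n → 0`.
-/

noncomputable def ratioCoeff (k : ℕ) : ℝ := (2 ^ (k + 2) - 2) / 4 ^ (k + 1)

lemma ratioCoeff_nonneg (k : ℕ) : 0 ≤ ratioCoeff k := by
  have : (2 : ℝ) ≤ 2 ^ (k + 2) := le_self_pow₀ (by norm_num) (by omega)
  unfold ratioCoeff
  positivity

lemma ratioCoeff_le_half (k : ℕ) : ratioCoeff k ≤ 1 / 2 := by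
  have hx : (1 : ℝ) ≤ 2 ^ k := one_le_pow₀ (by norm_num)
  have h4 : (4 : ℝ) ^ (k + 1) = 4 * (2 ^ k) ^ 2 := by
    rw [← pow_mul, pow_succ, mul_comm, show (4 : ℝ) = 2 ^ 2 by norm_num, ← pow_mul, mul_comm k]
  rw [ratioCoeff, div_le_iff₀ (by positivity), h4, pow_add]
  nlinarith [sq_nonneg ((2 : ℝ) ^ k - 1)]

lemma ratioCoeff_le_half_pow (k : ℕ) : ratioCoeff k ≤ (1 / 2) ^ k := by
  rw [ratioCoeff, div_le_iff₀ (by positivity), show (4 : ℝ) ^ (k + 1) = 2 ^ (k + 2) * 2 ^ k by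
    rw [← pow_add, show (4 : ℝ) = 2 ^ 2 by norm_num, ← pow_mul]; ring_nf]
  rw [mul_left_comm, ← mul_pow]
  norm_num

lemma tendsto_ratioCoeff : Tendsto ratioCoeff atTop (𝓝 0) :=
  squeeze_zero ratioCoeff_nonneg ratioCoeff_le_half_pow
    (tendsto_pow_atTop_nhds_zero_of_lt_one (by norm_num) (by norm_num))

lemma tendsto_one_of_eq_one_add_mul {r c : ℕ → ℝ} (hc₀ : ∀ n, 0 ≤ c n) (hc : ∀ n, c n ≤ 1 / 2)
    (hlim : Tendsto c atTop (𝓝 0)) (hr₀ : 0 ≤ r 0 ∧ r 0 ≤ 2)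
    (hr : ∀ n, r (n + 1) = 1 + c n * r n) : Tendsto r atTop (𝓝 1) := by
  have hbound : ∀ n, 0 ≤ r n ∧ r n ≤ 2 := by
    intro n
    induction n with
    | zero => exact hr₀
    | succ n ih =>
      rw [hr]
      constructor <;> nlinarith [hc₀ n, hc n, ih.1, ih.2]
  have hupper : Tendsto (fun n => 1 + c n * 2) atTop (𝓝 1) := by
    simpa using (hlim.mul_const 2).const_add 1
  refine (tendsto_add_atTop_iff_nat 1).mp
    (tendsto_of_tendsto_of_tendsto_of_le_of_le tendsto_const_nhds hupper (fun n => ?_) fun n => ?_)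
  · simp only [hr]
    nlinarith [hc₀ n, (hbound n).1]
  · simp only [hr]
    nlinarith [hc₀ n, (hbound n).2]

lemma ratio_succ_eq (l m : ℕ → ℕ) (hl : ∀ n ≥ 1, l n = 2 ^ (n ^ 2))
    (hm : ∀ n ≥ 2, m n = l n + 2 * (2 ^ n - 2) * m (n - 1)) (k : ℕ) :
    (m (k + 2) : ℝ) / l (k + 2) = 1 + ratioCoeff k * ((m (k + 1) : ℝ) / l (k + 1)) := by
  have h2 : 2 ≤ 2 ^ (k + 2) := le_self_pow₀ (by norm_num) (by omega)
  have hmk : (m (k + 2) : ℝ) = l (k + 2) + 2 * (2 ^ (k + 2) - 2) * m (k + 1) := by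
    rw [hm (k + 2) (by omega)]
    push_cast [Nat.cast_sub h2]
    rfl
  have hlk : (l (k + 2) : ℝ) = l (k + 1) * (2 * 4 ^ (k + 1)) := by
    rw [hl _ (by omega), hl _ (by omega)]
    push_cast
    rw [show (4 : ℝ) = 2 ^ 2 by norm_num, ← pow_mul, ← pow_succ', ← pow_add]
    ring_nf
  have hl₀ : (l (k + 1) : ℝ) ≠ 0 := by rw [hl _ (by omega)]; positivity
  rw [hmk, hlk, ratioCoeff]
  field_simp

/-- With `l n = 2 ^ (n²)` for `n ≥ 1`, `m 1 = l 1 = 2` and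
`m n = l n + 2 * (2^n - 2) * m (n-1)` for `n ≥ 2`, we have `m n / l n → 1`. -/
theorem stmt18 (l m : ℕ → ℕ)
    (hl : ∀ n ≥ 1, l n = 2 ^ (n ^ 2))
    (hm1 : m 1 = 2)
    (hm : ∀ n ≥ 2, m n = l n + 2 * (2 ^ n - 2) * m (n - 1)) :
    Tendsto (fun n => (m n : ℝ) / (l n : ℝ)) atTop (𝓝 1) := by
  have hr₀ : (m 1 : ℝ) / l 1 = 1 := by rw [hm1, hl 1 le_rfl]; norm_num
  refine (tendsto_add_atTop_iff_nat 1).mp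
    (tendsto_one_of_eq_one_add_mul ratioCoeff_nonneg ratioCoeff_le_half tendsto_ratioCoeff ?_
      (ratio_succ_eq l m hl hm))
  norm_num [hr₀]
end
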